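/- Let f : ℝ^(m×n) → ℝ be convex differentiable, k ≥ 2, and suppose the minimum width d = min_{0≤i≤k} d_i satisfies d = d₀ or d = d_k (no bottleneck). Then every local minimum (M₁,…,M_k) of L_k(M₁,…,M_k) = f(M_k⋯M₁) satisfies: M_k⋯M₁ is a global minimum of f over all of ℝ^(m×n). -/

import Mathlib

attribute [local instance] Matrix.frobeniusNormedAddCommGroup Matrix.frobeniusNormedSpace

/-- Product `M (b-1) * ⋯ * M a` of a chain of matrices (identity when `b = a`,
junk value `0` when `b < a`). -/
def chainProd (d : ℕ → ℕ) (M : ∀ i : ℕ, Matrix (Fin (d (i + 1))) (Fin (d i)) ℝ)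
    (a : ℕ) : (b : ℕ) → Matrix (Fin (d b)) (Fin (d a)) ℝ
  | 0 => if h : 0 = a then by rw [← h]; exact 1 else 0
  | (b + 1) => if h : b + 1 = a then by rw [← h]; exact 1
      else M b * chainProd d M a b

/-- Extend a `Fin k`-indexed tuple of layer matrices to an `ℕ`-indexed one (by `0`). -/
def ext (d : ℕ → ℕ) (k : ℕ)
    (N : ∀ i : Fin k, Matrix (Fin (d (i.1 + 1))) (Fin (d i.1)) ℝ) :
    ∀ i : ℕ, Matrix (Fin (d (i + 1))) (Fin (d i)) ℝ :=
  fun i => if h : i < k then N ⟨i, h⟩ else 0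

/-!
At a local minimum the gradient `G` of `f` at the product `W = M_k ⋯ M₁` vanishes; since `f` is
convex, `W` is then a global minimiser. Suppose `d_k` is the smallest width (the case of `d₀` is
the mirror image, with rows and columns exchanged). By downward induction on `j`, at every local
minimum `G` annihilates all matrices `Y M_j ⋯ M₁`. For the step, let `P = M_k ⋯ M_{j+2}`. If `P`
is injective, it is onto because `d_k ≤ d_{j+1}`, and the claim is the first-order condition in
`M_{j+1}`. Otherwise pick `p ≠ 0` with `P p = 0`: replacing `M_{j+1}` by `M_{j+1} + t p cᵀ`
leaves `W` unchanged, so for small `t ≠ 0` this is again a local minimum, and subtracting the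
induction hypotheses at the two points gives `G (u cᵀ M_j ⋯ M₁) = 0` for all `u`, `c`. Rank-one
matrices span.
-/

open Function
open scoped Matrix Topology

namespace Matrix

variable {m n l K : Type*} [Fintype m] [Fintype n] [Field K]

theorem exists_mul_eq_of_injective_mulVec [DecidableEq m] {A : Matrix m n K}
    (hA : Injective A.mulVec) (hcard : Fintype.card m ≤ Fintype.card n) (B : Matrix m l K) :
    ∃ X : Matrix n l K, A * X = B := by
  have hrank : Module.finrank K (n → K) = Module.finrank K (m → K) := by
    have := LinearMap.finrank_le_finrank_of_injective (f := A.mulVecLin) hA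
    simp only [Module.finrank_fintype_fun_eq_card] at this ⊢
    omega
  obtain ⟨R, hR⟩ := mulVec_surjective_iff_exists_right_inverse.mp
    ((LinearMap.injective_iff_surjective_of_finrank_eq_finrank (f := A.mulVecLin) hrank).mp hA)
  exact ⟨R * B, by rw [← Matrix.mul_assoc, hR, Matrix.one_mul]⟩

theorem exists_mul_eq_of_injective_vecMul [DecidableEq n] {A : Matrix m n K}
    (hA : Injective A.vecMul) (hcard : Fintype.card n ≤ Fintype.card m) (B : Matrix l n K) :
    ∃ X : Matrix l m K, X * A = B := by
  have hAt : Injective Aᵀ.mulVec := funext (mulVec_transpose A) ▸ hA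
  obtain ⟨X, hX⟩ := exists_mul_eq_of_injective_mulVec hAt hcard Bᵀ
  exact ⟨Xᵀ, by rw [← transpose_transpose B, ← hX, transpose_mul, transpose_transpose]⟩

@[elab_as_elim]
theorem induction_on_vecMulVec {R : Type*} [Semiring R] {P : Matrix m n R → Prop} (A : Matrix m n R)
    (h_add : ∀ B C, P B → P C → P (B + C)) (h_vecMulVec : ∀ u v, P (vecMulVec u v)) : P A := by
  classical
  refine Matrix.induction_on' A (by simpa using h_vecMulVec 0 0) h_add fun i j x => ?_
  convert h_vecMulVec (Pi.single i x) (Pi.single j 1) using 1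
  ext i' j'
  by_cases hi : i = i' <;> by_cases hj : j = j' <;> simp [single, vecMulVec_apply, *]

end Matrix

theorem ConvexOn.isMinOn_of_hasFDerivAt_eq_zero {E : Type*} [NormedAddCommGroup E]
    [NormedSpace ℝ E] {f : E → ℝ} (hf : ConvexOn ℝ Set.univ f) {x : E}
    (hx : HasFDerivAt f (0 : E →L[ℝ] ℝ) x) : IsMinOn f Set.univ x := by
  refine isMinOn_univ_iff.mpr fun y => ?_
  have hline : ConvexOn ℝ Set.univ fun t : ℝ => f (x + t • (y - x)) := by
    simpa [Function.comp_def, AffineMap.lineMap_apply, add_comm]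
      using hf.comp_affineMap (AffineMap.lineMap x y)
  have := hline.le_slope_of_hasDerivAt (Set.mem_univ 0) (Set.mem_univ 1) one_pos
    (hx.hasLineDerivAt (y - x))
  simpa [slope_def_field] using this

theorem IsLocalMin.eventually_isLocalMin {X β : Type*} [TopologicalSpace X] [Preorder β]
    {L : X → β} {x : X} (h : IsLocalMin L x) : ∀ᶠ y in 𝓝 x, L y = L x → IsLocalMin L y := by
  filter_upwards [h.eventually_nhds] with y hy hLy
  exact hy.mono fun z hz => hLy ▸ hz

section chainProd

variable {d : ℕ → ℕ} (M : ∀ i : ℕ, Matrix (Fin (d (i + 1))) (Fin (d i)) ℝ)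

@[simp]
theorem chainProd_self (a : ℕ) : chainProd d M a a = 1 := by
  cases a <;> simp [chainProd]

theorem chainProd_succ {a b : ℕ} (h : a ≤ b) :
    chainProd d M a (b + 1) = M b * chainProd d M a b := by
  simp [chainProd, show b + 1 ≠ a by omega]

theorem chainProd_of_lt {a b : ℕ} (h : b < a) : chainProd d M a b = 0 := by
  induction b with
  | zero => simp [chainProd, h.ne]
  | succ b ih => simp [chainProd, h.ne, ih (by omega)]

theorem chainProd_mul_chainProd {a b c : ℕ} (hab : a ≤ b) (hbc : b ≤ c) :
    chainProd d M b c * chainProd d M a b = chainProd d M a c := by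
  induction c, hbc using Nat.le_induction with
  | base => rw [chainProd_self, Matrix.one_mul]
  | succ c hbc ih =>
    rw [chainProd_succ M hbc, chainProd_succ M (hab.trans hbc), Matrix.mul_assoc, ih]

theorem chainProd_congr {M' : ∀ i : ℕ, Matrix (Fin (d (i + 1))) (Fin (d i)) ℝ} {a b : ℕ}
    (h : ∀ i, a ≤ i → i < b → M i = M' i) : chainProd d M a b = chainProd d M' a b := by
  induction b with
  | zero => simp [chainProd]
  | succ b ih =>
    rcases lt_or_ge b a with hba | hab
    · rcases (Nat.succ_le_of_lt hba).lt_or_eq with hba | rfl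
      · rw [chainProd_of_lt M hba, chainProd_of_lt M' hba]
      · rw [chainProd_self, chainProd_self]
    · rw [chainProd_succ M hab, chainProd_succ M' hab, h b hab b.lt_succ_self,
        ih fun i hi hib => h i hi (hib.trans b.lt_succ_self)]

theorem chainProd_update {a j b : ℕ} (haj : a ≤ j) (hjb : j < b)
    (X : Matrix (Fin (d (j + 1))) (Fin (d j)) ℝ) :
    chainProd d (update M j X) a b = chainProd d M (j + 1) b * X * chainProd d M a j := by
  rw [← chainProd_mul_chainProd _ (haj.trans j.le_succ) hjb, chainProd_succ _ haj,
    update_self,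
    chainProd_congr (update M j X) (M' := M) fun i hi _ => update_of_ne (by omega) _ _,
    chainProd_congr (update M j X) (M' := M) fun i _ hi => update_of_ne (by omega) _ _,
    Matrix.mul_assoc]

theorem chainProd_eq_mul_mul {a j b : ℕ} (haj : a ≤ j) (hjb : j < b) :
    chainProd d M a b = chainProd d M (j + 1) b * M j * chainProd d M a j := by
  rw [← chainProd_update M haj hjb, update_eq_self]

end chainProd

theorem tendsto_update_add_smul {ι : Type*} [DecidableEq ι] {E : ι → Type*}
    [∀ i, NormedAddCommGroup (E i)] [∀ i, NormedSpace ℝ (E i)] (x : ∀ i, E i) (i : ι) (v : E i) :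
    Filter.Tendsto (fun t : ℝ => update x i (x i + t • v)) (𝓝 0) (𝓝 x) := by
  have : Continuous fun t : ℝ => update x i (x i + t • v) :=
    continuous_const.update i (by fun_prop)
  simpa using this.tendsto 0

section LinearNetwork

variable {d : ℕ → ℕ} {k : ℕ} {f : Matrix (Fin (d k)) (Fin (d 0)) ℝ → ℝ}
  {M : ∀ i : Fin k, Matrix (Fin (d (i.1 + 1))) (Fin (d i.1)) ℝ}

theorem ext_apply (M : ∀ i : Fin k, Matrix (Fin (d (i.1 + 1))) (Fin (d i.1)) ℝ) {i : ℕ}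
    (hi : i < k) : ext d k M i = M ⟨i, hi⟩ :=
  dif_pos hi

theorem ext_update (M : ∀ i : Fin k, Matrix (Fin (d (i.1 + 1))) (Fin (d i.1)) ℝ) {j : ℕ}
    (hj : j < k) (X : Matrix (Fin (d (j + 1))) (Fin (d j)) ℝ) :
    ext d k (update M ⟨j, hj⟩ X) = update (ext d k M) j X := by
  funext i
  by_cases hij : i = j
  · subst hij
    simp [ext, hj]
  · rw [update_of_ne hij]
    unfold ext
    split_ifs
    · exact update_of_ne (fun h => hij (congrArg Fin.val h)) _ _
    · rfl

theorem chainProd_ext_update_add_smul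
    (M : ∀ i : Fin k, Matrix (Fin (d (i.1 + 1))) (Fin (d i.1)) ℝ) {a j b : ℕ} (haj : a ≤ j)
    (hjb : j < b) (hj : j < k) (t : ℝ) (Δ : Matrix (Fin (d (j + 1))) (Fin (d j)) ℝ) :
    chainProd d (ext d k (update M ⟨j, hj⟩ (M ⟨j, hj⟩ + t • Δ))) a b =
      chainProd d (ext d k M) a b +
        t • (chainProd d (ext d k M) (j + 1) b * Δ * chainProd d (ext d k M) a j) := by
  rw [ext_update, chainProd_update _ haj hjb, chainProd_eq_mul_mul _ haj hjb, ext_apply M hj,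
    Matrix.mul_add, Matrix.add_mul, Matrix.mul_smul, Matrix.smul_mul]

variable (d k) in
def deepLinearLoss (f : Matrix (Fin (d k)) (Fin (d 0)) ℝ → ℝ)
    (M : ∀ i : Fin k, Matrix (Fin (d (i.1 + 1))) (Fin (d i.1)) ℝ) : ℝ :=
  f (chainProd d (ext d k M) 0 k)

theorem IsLocalMin.fderiv_apply_mul_mul_eq_zero (hM : IsLocalMin (deepLinearLoss d k f) M)
    (hf : DifferentiableAt ℝ f (chainProd d (ext d k M) 0 k)) {j : ℕ} (hj : j < k)
    (Δ : Matrix (Fin (d (j + 1))) (Fin (d j)) ℝ) :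
    fderiv ℝ f (chainProd d (ext d k M) 0 k)
      (chainProd d (ext d k M) (j + 1) k * Δ * chainProd d (ext d k M) 0 j) = 0 := by
  have hline : IsLocalMin (fun t : ℝ => f (chainProd d (ext d k M) 0 k +
      t • (chainProd d (ext d k M) (j + 1) k * Δ * chainProd d (ext d k M) 0 j))) 0 := by
    filter_upwards [(tendsto_update_add_smul M ⟨j, hj⟩ Δ).eventually hM] with t ht
    simpa [deepLinearLoss, chainProd_ext_update_add_smul M (Nat.zero_le j) hj hj] using ht
  exact hline.hasDerivAt_eq_zero (hf.hasFDerivAt.hasLineDerivAt _)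

theorem IsLocalMin.exists_isLocalMin_update_add_smul (hM : IsLocalMin (deepLinearLoss d k f) M)
    {j : ℕ} (hj : j < k) {Δ : Matrix (Fin (d (j + 1))) (Fin (d j)) ℝ}
    (hΔ : chainProd d (ext d k M) (j + 1) k * Δ * chainProd d (ext d k M) 0 j = 0) :
    ∃ t ≠ (0 : ℝ), IsLocalMin (deepLinearLoss d k f) (update M ⟨j, hj⟩ (M ⟨j, hj⟩ + t • Δ)) := by
  have hloss (t : ℝ) : deepLinearLoss d k f (update M ⟨j, hj⟩ (M ⟨j, hj⟩ + t • Δ)) =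
      deepLinearLoss d k f M := by
    rw [deepLinearLoss, chainProd_ext_update_add_smul M (Nat.zero_le j) hj hj, hΔ, smul_zero,
      add_zero, deepLinearLoss]
  have hnear : ∀ᶠ t in 𝓝[≠] (0 : ℝ),
      IsLocalMin (deepLinearLoss d k f) (update M ⟨j, hj⟩ (M ⟨j, hj⟩ + t • Δ)) :=
    (((tendsto_update_add_smul M ⟨j, hj⟩ Δ).eventually hM.eventually_isLocalMin).filter_mono
      nhdsWithin_le_nhds).mono fun t ht => ht (hloss t)
  obtain ⟨t, ht, ht0⟩ := (hnear.and self_mem_nhdsWithin).exists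
  exact ⟨t, ht0, ht⟩

theorem IsLocalMin.fderiv_apply_mul_chainProd_eq_zero_of_mulVec_eq_zero
    (hM : IsLocalMin (deepLinearLoss d k f) M) {j : ℕ} (hj : j + 1 < k)
    {p : Fin (d (j + 1)) → ℝ} (hp : chainProd d (ext d k M) (j + 1) k *ᵥ p = 0) (hp0 : p ≠ 0)
    (h_succ : ∀ M', IsLocalMin (deepLinearLoss d k f) M' →
      ∀ Y : Matrix (Fin (d k)) (Fin (d (j + 1))) ℝ,
        fderiv ℝ f (chainProd d (ext d k M') 0 k) (Y * chainProd d (ext d k M') 0 (j + 1)) = 0)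
    (Y : Matrix (Fin (d k)) (Fin (d j)) ℝ) :
    fderiv ℝ f (chainProd d (ext d k M) 0 k) (Y * chainProd d (ext d k M) 0 j) = 0 := by
  induction Y using Matrix.induction_on_vecMulVec with
  | h_add A B hA hB => rw [Matrix.add_mul, map_add, hA, hB, add_zero]
  | h_vecMulVec u c =>
    have hPΔ : chainProd d (ext d k M) (j + 1) k * Matrix.vecMulVec p c = 0 := by
      rw [Matrix.mul_vecMulVec, hp, Matrix.zero_vecMulVec]
    obtain ⟨t, ht0, hM'⟩ := hM.exists_isLocalMin_update_add_smul (Δ := Matrix.vecMulVec p c)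
      (by omega) (by rw [hPΔ, Matrix.zero_mul])
    set Y' := Matrix.vecMulVec u ((p ⬝ᵥ p)⁻¹ • p)
    have hY' : Y' * Matrix.vecMulVec p c = Matrix.vecMulVec u c := by
      rw [Matrix.vecMulVec_mul_vecMulVec, smul_dotProduct, smul_eq_mul,
        inv_mul_cancel₀ (dotProduct_self_eq_zero.not.mpr hp0), one_smul]
    have h := h_succ _ hM' Y'
    rw [chainProd_ext_update_add_smul M (Nat.zero_le j) (by omega) (by omega), hPΔ,
      Matrix.zero_mul, smul_zero, add_zero,
      chainProd_ext_update_add_smul M (Nat.zero_le j) j.lt_succ_self (by omega),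
      chainProd_self, Matrix.one_mul, Matrix.mul_add, map_add, h_succ M hM Y', zero_add,
      Matrix.mul_smul, map_smul, smul_eq_zero, ← Matrix.mul_assoc, hY'] at h
    exact h.resolve_left ht0

theorem IsLocalMin.fderiv_apply_chainProd_mul_eq_zero_of_vecMul_eq_zero
    (hM : IsLocalMin (deepLinearLoss d k f) M) {i : ℕ} (hi : i < k)
    {q : Fin (d i) → ℝ} (hq : q ᵥ* chainProd d (ext d k M) 0 i = 0) (hq0 : q ≠ 0)
    (h_succ : ∀ M', IsLocalMin (deepLinearLoss d k f) M' →
      ∀ Y : Matrix (Fin (d i)) (Fin (d 0)) ℝ,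
        fderiv ℝ f (chainProd d (ext d k M') 0 k) (chainProd d (ext d k M') i k * Y) = 0)
    (Y : Matrix (Fin (d (i + 1))) (Fin (d 0)) ℝ) :
    fderiv ℝ f (chainProd d (ext d k M) 0 k) (chainProd d (ext d k M) (i + 1) k * Y) = 0 := by
  induction Y using Matrix.induction_on_vecMulVec with
  | h_add A B hA hB => rw [Matrix.mul_add, map_add, hA, hB, add_zero]
  | h_vecMulVec e v =>
    have hΔQ : Matrix.vecMulVec e q * chainProd d (ext d k M) 0 i = 0 := by
      ext
      simp [Matrix.vecMulVec_mul, hq, Matrix.vecMulVec_apply]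
    obtain ⟨t, ht0, hM'⟩ := hM.exists_isLocalMin_update_add_smul (Δ := Matrix.vecMulVec e q) hi
      (by rw [Matrix.mul_assoc, hΔQ, Matrix.mul_zero])
    set Y' := Matrix.vecMulVec ((q ⬝ᵥ q)⁻¹ • q) v
    have hY' : Matrix.vecMulVec e q * Y' = Matrix.vecMulVec e v := by
      rw [Matrix.vecMulVec_mul_vecMulVec, dotProduct_smul, smul_eq_mul,
        inv_mul_cancel₀ (dotProduct_self_eq_zero.not.mpr hq0), one_smul]
    have h := h_succ _ hM' Y'
    rw [chainProd_ext_update_add_smul M (Nat.zero_le i) hi hi, Matrix.mul_assoc, hΔQ,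
      Matrix.mul_zero, smul_zero, add_zero,
      chainProd_ext_update_add_smul M le_rfl hi hi,
      chainProd_self, Matrix.mul_one, Matrix.add_mul, map_add, h_succ M hM Y', zero_add,
      Matrix.smul_mul, map_smul, smul_eq_zero, Matrix.mul_assoc, hY'] at h
    exact h.resolve_left ht0

theorem IsLocalMin.fderiv_apply_mul_chainProd_eq_zero (hf : Differentiable ℝ f)
    (hd : ∀ i ≤ k, d k ≤ d i) (hM : IsLocalMin (deepLinearLoss d k f) M) {j : ℕ} (hj : j < k)
    (Y : Matrix (Fin (d k)) (Fin (d j)) ℝ) :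
    fderiv ℝ f (chainProd d (ext d k M) 0 k) (Y * chainProd d (ext d k M) 0 j) = 0 := by
  obtain ⟨n, rfl⟩ : ∃ n, k = n + 1 := ⟨k - 1, by omega⟩
  have hjn : j ≤ n := Nat.le_of_lt_succ hj
  clear hj
  induction hjn using Nat.decreasingInduction generalizing M with
  | self => simpa using hM.fderiv_apply_mul_mul_eq_zero (hf _) n.lt_succ_self Y
  | of_succ j hjn ih =>
    by_cases hP : Injective (chainProd d (ext d (n + 1) M) (j + 1) (n + 1)).mulVec
    · obtain ⟨Δ, rfl⟩ :=
        Matrix.exists_mul_eq_of_injective_mulVec hP (by simpa using hd _ (by omega)) Y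
      exact hM.fderiv_apply_mul_mul_eq_zero (hf _) (by omega) Δ
    · obtain ⟨p, hp, hp0⟩ :
          ∃ p, chainProd d (ext d (n + 1) M) (j + 1) (n + 1) *ᵥ p = 0 ∧ p ≠ 0 := by
        rw [← Matrix.coe_mulVecLin, injective_iff_map_eq_zero] at hP
        push Not at hP
        exact hP
      exact hM.fderiv_apply_mul_chainProd_eq_zero_of_mulVec_eq_zero (by omega) hp hp0
        (fun _ => ih) Y

theorem IsLocalMin.fderiv_apply_chainProd_mul_eq_zero (hf : Differentiable ℝ f)
    (hd : ∀ i ≤ k, d 0 ≤ d i) (hM : IsLocalMin (deepLinearLoss d k f) M) {i : ℕ} (hi : 1 ≤ i)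
    (hik : i ≤ k) (Y : Matrix (Fin (d i)) (Fin (d 0)) ℝ) :
    fderiv ℝ f (chainProd d (ext d k M) 0 k) (chainProd d (ext d k M) i k * Y) = 0 := by
  induction i, hi using Nat.le_induction generalizing M with
  | base => simpa using hM.fderiv_apply_mul_mul_eq_zero (hf _) (j := 0) hik Y
  | succ i hi ih =>
    by_cases hQ : Injective (chainProd d (ext d k M) 0 i).vecMul
    · obtain ⟨Δ, rfl⟩ :=
        Matrix.exists_mul_eq_of_injective_vecMul hQ (by simpa using hd i (by omega)) Y
      simpa [Matrix.mul_assoc] using hM.fderiv_apply_mul_mul_eq_zero (hf _) (by omega : i < k) Δ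
    · obtain ⟨q, hq, hq0⟩ : ∃ q, q ᵥ* chainProd d (ext d k M) 0 i = 0 ∧ q ≠ 0 := by
        rw [← Matrix.coe_vecMulLinear, injective_iff_map_eq_zero] at hQ
        push Not at hQ
        exact hQ
      exact hM.fderiv_apply_chainProd_mul_eq_zero_of_vecMul_eq_zero (by omega) hq hq0
        (fun _ hM' => ih hM' (by omega)) Y

end LinearNetwork

/-- Laurent–von Brecht: if the narrowest layer is the input or output
layer (no bottleneck), then at any local minimum of `L_k` the product `M_k ⋯ M_1`
is a global minimum of `f` over all matrices. -/
theorem stmt_17 (d : ℕ → ℕ) (k : ℕ) (hk : 2 ≤ k)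
    (f : Matrix (Fin (d k)) (Fin (d 0)) ℝ → ℝ)
    (hconv : ConvexOn ℝ Set.univ f) (hdiff : Differentiable ℝ f)
    (hNB : (∀ i ≤ k, d 0 ≤ d i) ∨ (∀ i ≤ k, d k ≤ d i))
    (M : ∀ i : Fin k, Matrix (Fin (d (i.1 + 1))) (Fin (d i.1)) ℝ)
    (hloc : IsLocalMin (fun N => f (chainProd d (ext d k N) 0 k)) M) :
    ∀ N : Matrix (Fin (d k)) (Fin (d 0)) ℝ, f (chainProd d (ext d k M) 0 k) ≤ f N := by
  have hgrad : fderiv ℝ f (chainProd d (ext d k M) 0 k) = 0 := by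
    ext1 Y
    rcases hNB with hd | hd
    · simpa using hloc.fderiv_apply_chainProd_mul_eq_zero hdiff hd (by omega) le_rfl Y
    · simpa using hloc.fderiv_apply_mul_chainProd_eq_zero hdiff hd (by omega) Y
  have hmin := hconv.isMinOn_of_hasFDerivAt_eq_zero (hgrad ▸ (hdiff _).hasFDerivAt)
  exact fun N => hmin (Set.mem_univ N)
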